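/- arXiv:0804.4640 — 4 statements merged into one kernel-verified Lean document; each statement's English description precedes it below -/
import Mathlib

section
/- If an isosceles triangle has integer side lengths β = γ ≠ α and integer area E, then α is even and the height h = 2E/α from the apex to the base is an integer. -/
theorem stmt_6 (α β : ℕ) (hα : 0 < α) (hβ : 0 < β) (hne : β ≠ α)
    (htri : α < 2 * β)
    (h E : ℝ)
    (hh : h = Real.sqrt ((β : ℝ) ^ 2 - (α : ℝ) ^ 2 / 4))
    (hE : E = (α : ℝ) / 2 * h)
    (e : ℕ) (he : 0 < e) (hEe : E = e) :
    2 ∣ α ∧ ∃ k : ℕ, h = k := by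
  have hle : α ^ 2 ≤ 4 * β ^ 2 := by nlinarith
  have hleR : ((α : ℝ)) ^ 2 / 4 ≤ (β : ℝ) ^ 2 := by
    have : (α : ℝ) ^ 2 ≤ 4 * (β : ℝ) ^ 2 := by exact_mod_cast hle
    linarith
  have hsq : h ^ 2 = (β : ℝ) ^ 2 - (α : ℝ) ^ 2 / 4 := by
    rw [hh]; exact Real.sq_sqrt (by linarith)
  have hEsq : (e : ℝ) ^ 2 = (α : ℝ) ^ 2 / 4 * ((β : ℝ) ^ 2 - (α : ℝ) ^ 2 / 4) := by
    rw [← hEe, hE]; rw [← hsq]; ring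
  have key : 16 * e ^ 2 = α ^ 2 * (4 * β ^ 2 - α ^ 2) := by
    have : ((16 * e ^ 2 : ℕ) : ℝ) = ((α ^ 2 * (4 * β ^ 2 - α ^ 2) : ℕ) : ℝ) := by
      push_cast [Nat.cast_sub hle]
      nlinarith [hEsq]
    exact_mod_cast this
  have heven : 2 ∣ α := by
    rcases Nat.even_or_odd α with hev | hod
    · exact hev.two_dvd
    · exfalso
      have h1 : Odd (α ^ 2) := hod.pow
      have h2 : Odd (4 * β ^ 2 - α ^ 2) := by
        rcases h1 with ⟨m, hm⟩
        refine ⟨2 * β ^ 2 - m - 1, ?_⟩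
        omega
      have := (h1.mul h2)
      rw [← key] at this
      rcases this with ⟨m, hm⟩
      omega
  obtain ⟨a, ha⟩ := heven
  have ha0 : 0 < a := by omega
  have haβ : a < β := by omega
  have key2 : e ^ 2 = a ^ 2 * (β ^ 2 - a ^ 2) := by
    have hsub : a ^ 2 ≤ β ^ 2 := Nat.pow_le_pow_left haβ.le 2
    have : 16 * e ^ 2 = 16 * (a ^ 2 * (β ^ 2 - a ^ 2)) := by
      rw [key, ha]
      have : 4 * β ^ 2 - (2 * a) ^ 2 = 4 * (β ^ 2 - a ^ 2) := by
        have := hsub; ring_nf; omega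
      rw [this]; ring
    omega
  have hae : a ∣ e := by
    have : a ^ 2 ∣ e ^ 2 := ⟨β ^ 2 - a ^ 2, key2⟩
    exact (Nat.pow_dvd_pow_iff two_ne_zero).mp this
  obtain ⟨k, hk⟩ := hae
  have hk2 : k ^ 2 = β ^ 2 - a ^ 2 := by
    have : a ^ 2 * k ^ 2 = a ^ 2 * (β ^ 2 - a ^ 2) := by
      rw [← key2, hk]; ring
    exact Nat.eq_of_mul_eq_mul_left (by positivity) this
  refine ⟨⟨a, ha⟩, k, ?_⟩
  have hsub : a ^ 2 ≤ β ^ 2 := Nat.pow_le_pow_left haβ.le 2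
  have : (β : ℝ) ^ 2 - (α : ℝ) ^ 2 / 4 = (k : ℝ) ^ 2 := by
    have : ((β ^ 2 - a ^ 2 : ℕ) : ℝ) = (k : ℝ) ^ 2 := by
      rw [← hk2]; push_cast; ring
    rw [Nat.cast_sub hsub] at this
    push_cast [ha] at this ⊢
    linarith
  rw [hh, this]
  exact Real.sqrt_sq (Nat.cast_nonneg k)
end

section
/- For the isosceles triangle with α = 4δmn, β = γ = δ(m²+n²), height h = δ(m²−n²) (δ, m, n positive integers, m > n, gcd(m,n)=1, m+n odd), the exradius ρ_α = 2δmn(m+n)/(m−n) is an integer if and only if (m−n) divides δ. -/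
theorem stmt_14 (δ m n : ℕ) (hδ : 0 < δ) (hn : 0 < n) (hmn : n < m)
    (h : Nat.Coprime m n) (hodd : Odd (m + n))
    (ρa : ℚ)
    (hρ : ρa = (2 * δ * m * n * (m + n) : ℚ) / ((m : ℚ) - n)) :
    (∃ z : ℤ, ρa = z) ↔ (m - n) ∣ δ := by
  set d := m - n with hd
  have hdpos : 0 < d := by omega
  have hodd_d : Odd d := by
    obtain ⟨k, hk⟩ := hodd
    exact ⟨k - n, by omega⟩
  have hdn : Nat.Coprime d n := (Nat.coprime_sub_self_left hmn.le).mpr h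
  have hdm : Nat.Coprime d m := by
    have : Nat.Coprime d (n + d) := (Nat.coprime_add_self_right).mpr hdn
    rwa [show n + d = m by omega] at this
  have hd2 : Nat.Coprime d 2 := Nat.coprime_two_right.mpr hodd_d
  have hdsum : Nat.Coprime d (m + n) := by
    have h2n : Nat.Coprime d (2 * n) := Nat.Coprime.mul_right hd2 hdn
    have : Nat.Coprime d (2 * n + d) := (Nat.coprime_add_self_right).mpr h2n
    rwa [show 2 * n + d = m + n by omega] at this
  have hco : Nat.Coprime d (2 * m * n * (m + n)) :=
    (((hd2.mul_right hdm).mul_right hdn).mul_right hdsum)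
  have hcast : ((m : ℚ) - n) = (d : ℚ) := by
    push_cast [hd, Nat.cast_sub hmn.le]; ring
  rw [hcast] at hρ
  constructor
  · rintro ⟨z, hz⟩
    have hdq : (d : ℚ) ≠ 0 := by positivity
    have hN : ((2 * δ * m * n * (m + n) : ℕ) : ℚ) = (z : ℚ) * d := by
      push_cast
      field_simp at hρ
      rw [hz] at hρ
      linarith [hρ]
    have hNZ : ((2 * δ * m * n * (m + n) : ℕ) : ℤ) = z * d := by
      exact_mod_cast hN
    have hdvd : (d : ℕ) ∣ 2 * δ * m * n * (m + n) := by
      have : (d : ℤ) ∣ ((2 * δ * m * n * (m + n) : ℕ) : ℤ) := ⟨z, by linarith [hNZ]⟩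
      exact_mod_cast this
    have : d ∣ δ * (2 * m * n * (m + n)) := by
      have e : δ * (2 * m * n * (m + n)) = 2 * δ * m * n * (m + n) := by ring
      rwa [e]
    exact (Nat.Coprime.dvd_of_dvd_mul_right hco this)
  · rintro ⟨k, hk⟩
    refine ⟨2 * k * m * n * (m + n), ?_⟩
    have hdq : (d : ℚ) ≠ 0 := by positivity
    rw [hρ, hk]
    push_cast
    field_simp
end

section
/- For positive integers K, m, n with m > n, the isosceles triangle with β = γ = Kn(m²+n²) and α = 2Kn(m²−n²) has integer area and integer exradii ρ_α = Km(m²−n²) and ρ_β = ρ_γ = 2Kmn². -/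
theorem stmt_15 (K m n : ℕ) (hK : 0 < K) (hn : 0 < n) (hmn : n < m)
    (α β h E s ρa ρb ρc : ℝ)
    (hβ : β = K * n * (m ^ 2 + n ^ 2))
    (hα : α = 2 * K * n * (m ^ 2 - n ^ 2 : ℕ))
    (hh : h = Real.sqrt (β ^ 2 - α ^ 2 / 4))
    (hE : E = α * h / 2)
    (hs : s = β + α / 2)
    (hρa : ρa = E / (s - α)) (hρb : ρb = E / (s - β)) (hρc : ρc = E / (s - β)) :
    (∃ e : ℕ, E = e) ∧ ρa = (K * m * (m ^ 2 - n ^ 2 : ℕ) : ℕ) ∧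
      ρb = (2 * K * m * n ^ 2 : ℕ) ∧ ρc = (2 * K * m * n ^ 2 : ℕ) := by
  have hle : (n : ℝ) ^ 2 ≤ (m : ℝ) ^ 2 := by
    have := hmn.le
    push_cast
    exact pow_le_pow_left₀ (by positivity) (by exact_mod_cast this) 2
  have hcast : ((m ^ 2 - n ^ 2 : ℕ) : ℝ) = (m : ℝ) ^ 2 - (n : ℝ) ^ 2 := by
    have : n ^ 2 ≤ m ^ 2 := Nat.pow_le_pow_left hmn.le 2
    push_cast [Nat.cast_sub this]
    ring
  have hK' : (0 : ℝ) < K := by exact_mod_cast hK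
  have hn' : (0 : ℝ) < n := by exact_mod_cast hn
  have hm' : (0 : ℝ) < m := by exact_mod_cast hn.trans hmn
  have hd : (0 : ℝ) < (m : ℝ) ^ 2 - (n : ℝ) ^ 2 := by
    have : (n : ℝ) < m := by exact_mod_cast hmn
    nlinarith
  have hh' : h = 2 * K * m * n ^ 2 := by
    rw [hh, hβ, hα, hcast]
    rw [show ((K : ℝ) * n * (m ^ 2 + n ^ 2)) ^ 2 - (2 * K * n * ((m:ℝ) ^ 2 - n ^ 2)) ^ 2 / 4
        = (2 * K * m * n ^ 2) ^ 2 by ring]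
    exact Real.sqrt_sq (by positivity)
  have hE' : E = 2 * K ^ 2 * m * n ^ 3 * ((m : ℝ) ^ 2 - n ^ 2) := by
    rw [hE, hα, hcast, hh']; ring
  have hsa : s - α = 2 * K * n ^ 3 := by
    rw [hs, hβ, hα, hcast]; ring
  have hsb : s - β = K * n * ((m : ℝ) ^ 2 - n ^ 2) := by
    rw [hs, hβ, hα, hcast]; ring
  refine ⟨⟨2 * K ^ 2 * m * n ^ 3 * (m ^ 2 - n ^ 2), by rw [hE']; push_cast [hcast]; ring⟩, ?_, ?_, ?_⟩
  · rw [hρa, hE', hsa]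
    push_cast [hcast]
    field_simp
  · rw [hρb, hE', hsb]
    push_cast
    rw [div_eq_iff (by positivity)]
    ring
  · rw [hρc, hE', hsb]
    push_cast
    rw [div_eq_iff (by positivity)]
    ring
end

section
/- For positive integers L, m, n with m > n, the isosceles triangle with β = γ = L(m−n)(m²+n²) and α = 4L(m−n)mn has integer area and integer exradii ρ_α = 2Lmn(m+n) and ρ_β = ρ_γ = L(m+n)(m−n)². -/
theorem stmt_16 (L m n : ℕ) (hL : 0 < L) (hn : 0 < n) (hmn : n < m)
    (α β h E s ρa ρb ρc : ℝ)
    (hβ : β = L * (m - n : ℕ) * (m ^ 2 + n ^ 2))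
    (hα : α = 4 * L * (m - n : ℕ) * m * n)
    (hh : h = Real.sqrt (β ^ 2 - α ^ 2 / 4))
    (hE : E = α * h / 2)
    (hs : s = β + α / 2)
    (hρa : ρa = E / (s - α)) (hρb : ρb = E / (s - β)) (hρc : ρc = E / (s - β)) :
    (∃ e : ℕ, E = e) ∧ ρa = (2 * L * m * n * (m + n) : ℕ) ∧
      ρb = (L * (m + n) * (m - n) ^ 2 : ℕ) ∧ ρc = (L * (m + n) * (m - n) ^ 2 : ℕ) := by
  have hd : ((m - n : ℕ) : ℝ) = (m : ℝ) - n := by rw [Nat.cast_sub hmn.le]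
  have hnm : (n : ℝ) < m := by exact_mod_cast hmn
  have hLpos : (0 : ℝ) < L := by exact_mod_cast hL
  have hnpos : (0 : ℝ) < n := by exact_mod_cast hn
  have hh' : h = L * ((m : ℝ) - n) * ((m : ℝ) ^ 2 - (n : ℝ) ^ 2) := by
    rw [hh, hα, hβ, hd,
      show ((L : ℝ) * ((m : ℝ) - n) * ((m : ℝ) ^ 2 + (n : ℝ) ^ 2)) ^ 2 -
        (4 * (L : ℝ) * ((m : ℝ) - n) * m * n) ^ 2 / 4 =
        ((L : ℝ) * ((m : ℝ) - n) * ((m : ℝ) ^ 2 - (n : ℝ) ^ 2)) ^ 2 by ring]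
    apply Real.sqrt_sq
    have h1 : (0 : ℝ) ≤ (m : ℝ) - n := by linarith
    have h2 : (0 : ℝ) ≤ (m : ℝ) ^ 2 - n ^ 2 := by nlinarith
    positivity
  have hE' : E = 2 * (L : ℝ) ^ 2 * ((m : ℝ) - n) ^ 3 * m * n * ((m : ℝ) + n) := by
    rw [hE, hα, hh', hd]; ring
  have hsα : s - α = (L : ℝ) * ((m : ℝ) - n) ^ 3 := by
    rw [hs, hα, hβ, hd]; ring
  have hsβ : s - β = 2 * (L : ℝ) * ((m : ℝ) - n) * m * n := by
    rw [hs, hα, hd]; ring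
  have hdpos : (0 : ℝ) < (m : ℝ) - n := by linarith
  have hsαne : s - α ≠ 0 := by
    rw [hsα]; exact ne_of_gt (by nlinarith [pow_pos hdpos 3])
  have hsβne : s - β ≠ 0 := by
    rw [hsβ]; exact ne_of_gt (by nlinarith [mul_pos (mul_pos (mul_pos hLpos hdpos) (hnpos.trans hnm)) hnpos])
  refine ⟨⟨2 * L ^ 2 * (m - n) ^ 3 * m * n * (m + n), ?_⟩, ?_, ?_, ?_⟩
  · rw [hE']; push_cast [hd]; ring
  · rw [hρa, div_eq_iff hsαne, hE', hsα]; push_cast; ring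
  · rw [hρb, div_eq_iff hsβne, hE', hsβ]; push_cast [hd]; ring
  · rw [hρc, div_eq_iff hsβne, hE', hsβ]; push_cast [hd]; ring
end
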